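/- Let m > 0 and ξ, v ∈ ℝ³, and let E := √(m² + |ξ|²). For l ∈ {1,2,3} set D_l(ξ) := − (m ξ_l)/(2√2 · E^{5/2} (E+m)^{1/2}) · I₄ + (ξ_l (2E+m))/(2√2 · E^{5/2} (E+m)^{3/2}) · (ξ·α)β − (2E(E+m))^{-1/2} · α_l β (this is the partial derivative ∂_{ξ_l} u₀(ξ)). Then the gradient-coupling term of the effective semirelativistic Hamiltonian satisfies the 4×4 matrix identity −i Σ_{l=1}^3 v_l · π_ref D_l(ξ) u₀(ξ)* π_ref = (1/(2E(E+m))) · M, where M is the 4×4 matrix whose upper-left 2×2 block is (v × ξ)·σ := Σ_{k=1}^3 (v × ξ)_k σ_k (with v × ξ the cross product in ℝ³) and whose remaining entries are zero. -/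

import Mathlib

noncomputable section
open Complex Matrix

/-- The Pauli matrices `σ₁, σ₂, σ₃`. -/
def pauli : Fin 3 → Matrix (Fin 2) (Fin 2) ℂ :=
  ![!![0, 1; 1, 0], !![0, -Complex.I; Complex.I, 0], !![1, 0; 0, -1]]

/-- The Dirac matrices `α_j = [[0, σ_j],[σ_j, 0]]` in 2×2 block form. -/
def diracAlpha (j : Fin 3) : Matrix (Fin 4) (Fin 4) ℂ :=
  Matrix.reindex finSumFinEquiv finSumFinEquiv
    (Matrix.fromBlocks 0 (pauli j) (pauli j) 0)

/-- The Dirac matrix `β = diag(1,1,-1,-1)`. -/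
def diracBeta : Matrix (Fin 4) (Fin 4) ℂ :=
  Matrix.reindex finSumFinEquiv finSumFinEquiv
    (Matrix.fromBlocks (1 : Matrix (Fin 2) (Fin 2) ℂ) 0 0
      (-1 : Matrix (Fin 2) (Fin 2) ℂ))

/-- The reference projection `π_ref = diag(1,1,0,0)`. -/
def piRef : Matrix (Fin 4) (Fin 4) ℂ :=
  Matrix.reindex finSumFinEquiv finSumFinEquiv
    (Matrix.fromBlocks (1 : Matrix (Fin 2) (Fin 2) ℂ) 0 0
      (0 : Matrix (Fin 2) (Fin 2) ℂ))

/-- `ξ·α := Σ_j ξ_j α_j`. -/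
def xiDotAlpha (ξ : Fin 3 → ℝ) : Matrix (Fin 4) (Fin 4) ℂ :=
  ∑ j, (ξ j : ℂ) • diracAlpha j

/-- The free Dirac Hamiltonian symbol `H₀(ξ) := mβ + ξ·α`. -/
def diracH0 (m : ℝ) (ξ : Fin 3 → ℝ) : Matrix (Fin 4) (Fin 4) ℂ :=
  (m : ℂ) • diracBeta + xiDotAlpha ξ

/-- The relativistic dispersion `E := √(m² + |ξ|²)`. -/
def Ed (m : ℝ) (ξ : Fin 3 → ℝ) : ℝ := Real.sqrt (m ^ 2 + ∑ j, ξ j ^ 2)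

/-- The Foldy–Wouthuysen unitary `u₀(ξ) := (2E(E+m))^{-1/2} ((E+m) I₄ - (ξ·α)β)`. -/
def u0 (m : ℝ) (ξ : Fin 3 → ℝ) : Matrix (Fin 4) (Fin 4) ℂ :=
  (((Real.sqrt (2 * Ed m ξ * (Ed m ξ + m)))⁻¹ : ℝ) : ℂ) •
    (((Ed m ξ + m : ℝ) : ℂ) • (1 : Matrix (Fin 4) (Fin 4) ℂ) - xiDotAlpha ξ * diracBeta)

/-- The matrix `D_l(ξ) = ∂_{ξ_l}u₀(ξ)`:
`D_l = -(mξ_l)/(2√2 E^{5/2}(E+m)^{1/2}) I₄ + (ξ_l(2E+m))/(2√2 E^{5/2}(E+m)^{3/2}) (ξ·α)β - (2E(E+m))^{-1/2} α_l β`. -/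
def Dmat (m : ℝ) (ξ : Fin 3 → ℝ) (l : Fin 3) : Matrix (Fin 4) (Fin 4) ℂ :=
  ((-(m * ξ l) / (2 * Real.sqrt 2 * Ed m ξ ^ ((5:ℝ)/2) * (Ed m ξ + m) ^ ((1:ℝ)/2)) : ℝ) : ℂ) •
      (1 : Matrix (Fin 4) (Fin 4) ℂ)
    + ((ξ l * (2 * Ed m ξ + m) / (2 * Real.sqrt 2 * Ed m ξ ^ ((5:ℝ)/2) * (Ed m ξ + m) ^ ((3:ℝ)/2)) : ℝ) : ℂ) •
      (xiDotAlpha ξ * diracBeta)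
    - (((Real.sqrt (2 * Ed m ξ * (Ed m ξ + m)))⁻¹ : ℝ) : ℂ) • (diracAlpha l * diracBeta)

/-- The cross product on `ℝ³`. -/
def cross3 (v w : Fin 3 → ℝ) : Fin 3 → ℝ :=
  ![v 1 * w 2 - v 2 * w 1, v 2 * w 0 - v 0 * w 2, v 0 * w 1 - v 1 * w 0]

/-!
In the splitting `ℂ⁴ = ℂ² ⊕ ℂ²` we have `(ξ·α)β = [[0, -ξ·σ], [ξ·σ, 0]]` and
`α_l β = [[0, -σ_l], [σ_l, 0]]`, so `D_l` and `u₀*` are `2×2` block matrices with scalar diagonal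
blocks, and `π_ref X Y π_ref` only retains the upper-left block `X₁₁ Y₁₁ + X₁₂ Y₂₁` of `X Y`.
For `X = D_l`, `Y = u₀*` this block is `(2E(E+m))⁻¹ (σ_l (ξ·σ) - ξ_l)`: the two scalar terms of
`D_l` combine to `-ξ_l (2E(E+m))^{-1/2}` because `|ξ|² = E² - m²`. Summing against `v` and using
`(v·σ)(ξ·σ) = v·ξ + i (v×ξ)·σ` leaves `i (v×ξ)·σ`, which `-i` turns into the claim.
-/

section Blocks

variable {ι l m n R α : Type*}

theorem reindex_fromBlocks_mul [Fintype l] [Fintype m] [Fintype n] [NonUnitalNonAssocSemiring α]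
    (e : l ⊕ m ≃ n)
    (A : Matrix l l α) (B : Matrix l m α) (C : Matrix m l α) (D : Matrix m m α)
    (A' : Matrix l l α) (B' : Matrix l m α) (C' : Matrix m l α) (D' : Matrix m m α) :
    reindex e e (fromBlocks A B C D) * reindex e e (fromBlocks A' B' C' D') =
      reindex e e (fromBlocks (A * A' + B * C') (A * B' + B * D') (C * A' + D * C')
        (C * B' + D * D')) := by
  rw [reindex_apply, reindex_apply, reindex_apply, submatrix_mul_equiv, fromBlocks_multiply]

theorem reindex_fromBlocks_one_mul_mul_one [Fintype l] [Fintype m] [Fintype n] [Semiring α]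
    [DecidableEq l] (e : l ⊕ m ≃ n)
    (A : Matrix l l α) (B : Matrix l m α) (C : Matrix m l α) (D : Matrix m m α)
    (A' : Matrix l l α) (B' : Matrix l m α) (C' : Matrix m l α) (D' : Matrix m m α) :
    reindex e e (fromBlocks 1 0 0 0) * reindex e e (fromBlocks A B C D) *
        reindex e e (fromBlocks A' B' C' D') * reindex e e (fromBlocks 1 0 0 0) =
      reindex e e (fromBlocks (A * A' + B * C') 0 0 0) := by
  simp only [reindex_fromBlocks_mul, Matrix.one_mul, Matrix.mul_one, Matrix.zero_mul,
    Matrix.mul_zero, add_zero]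

theorem reindex_fromBlocks_conjTranspose [Star α] (e : l ⊕ m ≃ n)
    (A : Matrix l l α) (B : Matrix l m α) (C : Matrix m l α) (D : Matrix m m α) :
    (reindex e e (fromBlocks A B C D))ᴴ = reindex e e (fromBlocks Aᴴ Cᴴ Bᴴ Dᴴ) := by
  rw [reindex_apply, reindex_apply, conjTranspose_submatrix, fromBlocks_conjTranspose]

theorem reindex_fromBlocks_add [Add α] (e : l ⊕ m ≃ n)
    (A : Matrix l l α) (B : Matrix l m α) (C : Matrix m l α) (D : Matrix m m α)
    (A' : Matrix l l α) (B' : Matrix l m α) (C' : Matrix m l α) (D' : Matrix m m α) :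
    reindex e e (fromBlocks A B C D) + reindex e e (fromBlocks A' B' C' D') =
      reindex e e (fromBlocks (A + A') (B + B') (C + C') (D + D')) := by
  rw [← fromBlocks_add]
  rfl

theorem reindex_fromBlocks_sub [Sub α] (e : l ⊕ m ≃ n)
    (A : Matrix l l α) (B : Matrix l m α) (C : Matrix m l α) (D : Matrix m m α)
    (A' : Matrix l l α) (B' : Matrix l m α) (C' : Matrix m l α) (D' : Matrix m m α) :
    reindex e e (fromBlocks A B C D) - reindex e e (fromBlocks A' B' C' D') =
      reindex e e (fromBlocks (A - A') (B - B') (C - C') (D - D')) := by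
  ext i j
  obtain ⟨a | a, rfl⟩ := e.surjective i <;> obtain ⟨b | b, rfl⟩ := e.surjective j <;> simp

theorem smul_reindex_fromBlocks [SMul R α] (e : l ⊕ m ≃ n) (r : R)
    (A : Matrix l l α) (B : Matrix l m α) (C : Matrix m l α) (D : Matrix m m α) :
    r • reindex e e (fromBlocks A B C D) =
      reindex e e (fromBlocks (r • A) (r • B) (r • C) (r • D)) := by
  rw [← fromBlocks_smul]
  rfl

theorem sum_smul_reindex_fromBlocks [Semiring R] [AddCommMonoid α] [Module R α] (e : l ⊕ m ≃ n)
    (s : Finset ι) (r : ι → R) (A : ι → Matrix l l α) (B : ι → Matrix l m α)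
    (C : ι → Matrix m l α) (D : ι → Matrix m m α) :
    ∑ i ∈ s, r i • reindex e e (fromBlocks (A i) (B i) (C i) (D i)) =
      reindex e e (fromBlocks (∑ i ∈ s, r i • A i) (∑ i ∈ s, r i • B i) (∑ i ∈ s, r i • C i)
        (∑ i ∈ s, r i • D i)) := by
  ext i j
  obtain ⟨a | a, rfl⟩ := e.surjective i <;> obtain ⟨b | b, rfl⟩ := e.surjective j <;>
    simp [Matrix.sum_apply]

theorem smul_one_eq_reindex_fromBlocks [DecidableEq l] [DecidableEq m] [DecidableEq n] [Zero α]
    [One α] [SMulZeroClass R α] (e : l ⊕ m ≃ n) (c : R) :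
    c • (1 : Matrix n n α) = reindex e e (fromBlocks (c • 1) 0 0 (c • 1)) := by
  have h : reindex e e (fromBlocks (1 : Matrix l l α) 0 0 1) = 1 := by
    rw [fromBlocks_one, reindex_apply, submatrix_one_equiv]
  rw [← h, smul_reindex_fromBlocks]
  congr 2 <;> ext <;> exact smul_zero c

end Blocks

def pauliDot (x : Fin 3 → ℝ) : Matrix (Fin 2) (Fin 2) ℂ := ∑ j, (x j : ℂ) • pauli j

theorem pauliDot_conjTranspose (x : Fin 3 → ℝ) : (pauliDot x)ᴴ = pauliDot x := by
  ext i k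
  fin_cases i <;> fin_cases k <;> simp [pauliDot, pauli, Fin.sum_univ_three]

theorem pauliDot_mul_pauliDot (x y : Fin 3 → ℝ) :
    pauliDot x * pauliDot y = ((∑ j, x j * y j : ℝ) : ℂ) • 1 + I • pauliDot (cross3 x y) := by
  ext i k
  fin_cases i <;> fin_cases k <;>
    simp [pauliDot, pauli, cross3, Fin.sum_univ_three, Matrix.mul_apply] <;> ring_nf <;>
    simp [I_sq] <;> ring

theorem pauliDot_mul_self (x : Fin 3 → ℝ) :
    pauliDot x * pauliDot x = ((∑ j, x j ^ 2 : ℝ) : ℂ) • 1 := by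
  have hx : cross3 x x = 0 := by ext j; fin_cases j <;> simp [cross3] <;> ring
  rw [pauliDot_mul_pauliDot, hx]
  simp [pauliDot, sq]

theorem sum_smul_pauli_mul_pauliDot_sub (v ξ : Fin 3 → ℝ) :
    ∑ l, (v l : ℂ) • (pauli l * pauliDot ξ - (ξ l : ℂ) • 1) = I • pauliDot (cross3 v ξ) := by
  have h : ∑ l, (v l : ℂ) • (pauli l * pauliDot ξ) = pauliDot v * pauliDot ξ := by
    simp only [pauliDot, Finset.sum_mul, smul_mul_assoc]
  simp only [smul_sub, Finset.sum_sub_distrib, h, pauliDot_mul_pauliDot, smul_smul,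
    ← Finset.sum_smul]
  push_cast
  abel

local notation "toFin4" => reindex (finSumFinEquiv (m := 2) (n := 2)) (finSumFinEquiv (m := 2) (n := 2))

theorem xiDotAlpha_eq (ξ : Fin 3 → ℝ) :
    xiDotAlpha ξ = toFin4 (fromBlocks 0 (pauliDot ξ) (pauliDot ξ) 0) := by
  simp only [xiDotAlpha, diracAlpha, pauliDot, sum_smul_reindex_fromBlocks, smul_zero,
    Finset.sum_const_zero]

theorem xiDotAlpha_mul_diracBeta (ξ : Fin 3 → ℝ) :
    xiDotAlpha ξ * diracBeta = toFin4 (fromBlocks 0 (-pauliDot ξ) (pauliDot ξ) 0) := by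
  rw [xiDotAlpha_eq, diracBeta, reindex_fromBlocks_mul]
  simp

theorem diracAlpha_mul_diracBeta (j : Fin 3) :
    diracAlpha j * diracBeta = toFin4 (fromBlocks 0 (-pauli j) (pauli j) 0) := by
  rw [diracAlpha, diracBeta, reindex_fromBlocks_mul]
  simp

theorem smul_one_sub_xiDotAlpha_mul_diracBeta (a : ℂ) (ξ : Fin 3 → ℝ) :
    a • 1 - xiDotAlpha ξ * diracBeta =
      toFin4 (fromBlocks (a • 1) (pauliDot ξ) (-pauliDot ξ) (a • 1)) := by
  rw [xiDotAlpha_mul_diracBeta, smul_one_eq_reindex_fromBlocks (finSumFinEquiv (m := 2) (n := 2)),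
    reindex_fromBlocks_sub]
  simp

theorem smul_one_add_smul_xiDotAlpha_mul_diracBeta_sub (a b c : ℂ) (ξ : Fin 3 → ℝ) (l : Fin 3) :
    a • 1 + b • (xiDotAlpha ξ * diracBeta) - c • (diracAlpha l * diracBeta) =
      toFin4 (fromBlocks (a • 1) (c • pauli l - b • pauliDot ξ) (b • pauliDot ξ - c • pauli l)
        (a • 1)) := by
  rw [xiDotAlpha_mul_diracBeta, diracAlpha_mul_diracBeta,
    smul_one_eq_reindex_fromBlocks (finSumFinEquiv (m := 2) (n := 2)), smul_reindex_fromBlocks,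
    smul_reindex_fromBlocks, reindex_fromBlocks_add, reindex_fromBlocks_sub]
  simp only [smul_zero, smul_neg, add_zero, sub_zero, zero_add, sub_neg_eq_add, neg_add_eq_sub]

theorem u0_conjTranspose (m : ℝ) (ξ : Fin 3 → ℝ) :
    (u0 m ξ)ᴴ = (((√(2 * Ed m ξ * (Ed m ξ + m)))⁻¹ : ℝ) : ℂ) •
      toFin4 (fromBlocks (((Ed m ξ + m : ℝ) : ℂ) • 1) (-pauliDot ξ) (pauliDot ξ)
        (((Ed m ξ + m : ℝ) : ℂ) • 1)) := by
  rw [u0, smul_one_sub_xiDotAlpha_mul_diracBeta, conjTranspose_smul,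
    reindex_fromBlocks_conjTranspose]
  simp [pauliDot_conjTranspose]

/-- For `x = ξ_l` and `r = |ξ|²` the left side is `a (E+m) - b |ξ|²`, where `a`, `b` are the
coefficients of `I₄` and `(ξ·α)β` in `D_l`: the scalar part of the upper-left block of `D_l u₀*`. -/
theorem Dmat_coeff_identity {m E x r : ℝ} (hE : 0 < E) (hEm : 0 < E + m)
    (hr : E ^ 2 = m ^ 2 + r) :
    -(m * x) / (2 * √2 * E ^ ((5:ℝ)/2) * (E + m) ^ ((1:ℝ)/2)) * (E + m)
      - x * (2 * E + m) / (2 * √2 * E ^ ((5:ℝ)/2) * (E + m) ^ ((3:ℝ)/2)) * r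
      = -((√(2 * E * (E + m)))⁻¹ * x) := by
  have rpow_div_two {y : ℝ} (hy : 0 < y) (k : ℕ) : y ^ ((k:ℝ)/2) = √y ^ k := by
    rw [Real.sqrt_eq_rpow, ← Real.rpow_natCast, ← Real.rpow_mul hy.le]
    ring_nf
  rw [show ((5:ℝ)/2) = ((5:ℕ):ℝ)/2 by norm_num, show ((3:ℝ)/2) = ((3:ℕ):ℝ)/2 by norm_num,
    show ((1:ℝ)/2) = ((1:ℕ):ℝ)/2 by norm_num, rpow_div_two hE, rpow_div_two hEm,
    rpow_div_two hEm, Real.sqrt_mul (by positivity), Real.sqrt_mul (by positivity)]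
  have hp := Real.sq_sqrt hE.le
  have hq := Real.sq_sqrt hEm.le
  have : 0 < √E := Real.sqrt_pos.2 hE
  have : 0 < √(E + m) := Real.sqrt_pos.2 hEm
  have : 0 < √2 := by positivity
  generalize √E = p at *
  generalize √(E + m) = q at *
  generalize √2 = t at *
  obtain rfl : r = E ^ 2 - m ^ 2 := by linarith
  obtain rfl : m = q ^ 2 - E := by linarith
  subst hp
  field_simp
  ring

theorem piRef_mul_Dmat_mul_u0_conjTranspose_mul_piRef {m : ℝ} (hm : 0 < m) (ξ : Fin 3 → ℝ)
    (l : Fin 3) :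
    piRef * Dmat m ξ l * (u0 m ξ)ᴴ * piRef = (((2 * Ed m ξ * (Ed m ξ + m))⁻¹ : ℝ) : ℂ) •
      toFin4 (fromBlocks (pauli l * pauliDot ξ - (ξ l : ℂ) • 1) 0 0 0) := by
  have hE : 0 < Ed m ξ := Real.sqrt_pos.2 (by positivity)
  have hr : Ed m ξ ^ 2 = m ^ 2 + ∑ j, ξ j ^ 2 := Real.sq_sqrt (by positivity)
  have hcoeff := Dmat_coeff_identity hE (by linarith) hr (x := ξ l)
  have hc : (√(2 * Ed m ξ * (Ed m ξ + m)))⁻¹ ^ 2 = (2 * Ed m ξ * (Ed m ξ + m))⁻¹ := by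
    rw [inv_pow, Real.sq_sqrt (by positivity)]
  rw [Dmat, smul_one_add_smul_xiDotAlpha_mul_diracBeta_sub, u0_conjTranspose, Matrix.mul_smul,
    Matrix.smul_mul, piRef, reindex_fromBlocks_one_mul_mul_one, smul_reindex_fromBlocks,
    smul_reindex_fromBlocks]
  simp only [smul_zero]
  generalize -(m * ξ l) / _ = a at hcoeff ⊢
  generalize ξ l * (2 * Ed m ξ + m) / _ = b at hcoeff ⊢
  generalize (√(2 * Ed m ξ * (Ed m ξ + m)))⁻¹ = c at hcoeff hc ⊢
  have hcoeffC : (a : ℂ) * (Ed m ξ + m : ℝ) - b * (∑ j, ξ j ^ 2 : ℝ) = -(c * ξ l) := by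
    exact_mod_cast hcoeff
  have hcC : (c : ℂ) ^ 2 = (2 * Ed m ξ * (Ed m ξ + m))⁻¹ := by exact_mod_cast hc
  congr 2
  rw [smul_mul_smul_comm, sub_mul, smul_mul_assoc, smul_mul_assoc, pauliDot_mul_self, one_mul]
  linear_combination (norm := module) ((c : ℂ) • hcoeffC) • (1 : Matrix (Fin 2) (Fin 2) ℂ)
    + hcC • (pauli l * pauliDot ξ - (ξ l : ℂ) • 1)

/-- The gradient-coupling term of the effective semirelativistic Hamiltonian:
`-i Σ_l v_l π_ref D_l(ξ) u₀(ξ)* π_ref = (1/(2E(E+m))) M`, where `M` has upper-left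
`2×2` block `(v × ξ)·σ` and zeros elsewhere. -/
theorem statement18 (m : ℝ) (hm : 0 < m) (ξ v : Fin 3 → ℝ) :
    (-Complex.I) • (∑ l : Fin 3, (v l : ℂ) • (piRef * Dmat m ξ l * (u0 m ξ)ᴴ * piRef))
      = (((2 * Ed m ξ * (Ed m ξ + m))⁻¹ : ℝ) : ℂ) •
          Matrix.reindex finSumFinEquiv finSumFinEquiv
            (Matrix.fromBlocks (∑ k : Fin 3, ((cross3 v ξ) k : ℂ) • pauli k) 0 0
              (0 : Matrix (Fin 2) (Fin 2) ℂ)) := by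
  set κ : ℂ := (((2 * Ed m ξ * (Ed m ξ + m))⁻¹ : ℝ) : ℂ)
  calc -I • ∑ l, (v l : ℂ) • (piRef * Dmat m ξ l * (u0 m ξ)ᴴ * piRef)
      = -I • ∑ l, (v l : ℂ) • κ •
          toFin4 (fromBlocks (pauli l * pauliDot ξ - (ξ l : ℂ) • 1) 0 0 0) := by
        simp only [piRef_mul_Dmat_mul_u0_conjTranspose_mul_piRef hm, κ]
    _ = κ • toFin4
          (fromBlocks (-I • ∑ l, (v l : ℂ) • (pauli l * pauliDot ξ - (ξ l : ℂ) • 1)) 0 0 0) := by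
        simp only [smul_comm (v _ : ℂ) κ]
        rw [← Finset.smul_sum, sum_smul_reindex_fromBlocks, smul_comm (-I) κ,
          smul_reindex_fromBlocks]
        simp only [smul_zero, Finset.sum_const_zero]
    _ = κ • toFin4 (fromBlocks (pauliDot (cross3 v ξ)) 0 0 0) := by
        rw [sum_smul_pauli_mul_pauliDot_sub, smul_smul, neg_mul, I_mul_I, neg_neg, one_smul]
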